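/- Let Λ be a locally convex k-graph. Then for every vertex v, the set Λ^{≤∞}(v) of boundary paths with range v is nonempty. -/

import Mathlib

open scoped ENNReal

/-- A `k`-graph: a countable category `Λ` together with a degree functor
`d : Λ → ℕ^k` satisfying the unique factorisation property. -/
structure KGraph (k : ℕ) where
  Obj : Type
  Path : Type
  countable_path : Countable Path
  r : Path → Obj
  s : Path → Obj
  ι : Obj → Path
  comp : (μ ν : Path) → s μ = r ν → Path
  d : Path → (Fin k → ℕ)
  r_ι : ∀ v, r (ι v) = v
  s_ι : ∀ v, s (ι v) = v
  d_ι : ∀ v, d (ι v) = 0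
  r_comp : ∀ μ ν h, r (comp μ ν h) = r μ
  s_comp : ∀ μ ν h, s (comp μ ν h) = s ν
  d_comp : ∀ μ ν h, d (comp μ ν h) = d μ + d ν
  comp_ι_left : ∀ μ (h : s (ι (r μ)) = r μ), comp (ι (r μ)) μ h = μ
  comp_ι_right : ∀ μ (h : s μ = r (ι (s μ))), comp μ (ι (s μ)) h = μ
  comp_assoc : ∀ μ ν ξ (h1 : s μ = r ν) (h2 : s ν = r ξ)
      (h3 : s (comp μ ν h1) = r ξ) (h4 : s μ = r (comp ν ξ h2)),
      comp (comp μ ν h1) ξ h3 = comp μ (comp ν ξ h2) h4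
  factor : ∀ lam (m n : Fin k → ℕ), d lam = m + n →
      ∃! p : Path × Path, ∃ h : s p.1 = r p.2,
        comp p.1 p.2 h = lam ∧ d p.1 = m ∧ d p.2 = n

namespace KGraph

/-- The standard generator `e_i` of `ℕ^k`. -/
def e (k : ℕ) (i : Fin k) : Fin k → ℕ := Pi.single i 1

variable {k : ℕ} (Λ : KGraph k)

/-- `Λ^m`, the paths of degree `m`. -/
def degSet (m : Fin k → ℕ) : Set Λ.Path := {lam | Λ.d lam = m}

/-- `Λ^m(v)`, the paths of degree `m` with range `v`. -/
def degAt (m : Fin k → ℕ) (v : Λ.Obj) : Set Λ.Path :=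
  {lam | Λ.d lam = m ∧ Λ.r lam = v}

/-- `Λ^{≤ q}`: paths `λ` with `d λ ≤ q` which cannot be extended within degree `q`. -/
def le (q : Fin k → ℕ) : Set Λ.Path :=
  {lam | Λ.d lam ≤ q ∧
    ∀ i : Fin k, Λ.d lam + e k i ≤ q → Λ.degAt (e k i) (Λ.s lam) = ∅}

/-- `Λ^{≤ q}(v)`. -/
def leAt (q : Fin k → ℕ) (v : Λ.Obj) : Set Λ.Path :=
  {lam | lam ∈ Λ.le q ∧ Λ.r lam = v}

/-- Row-finiteness: each `Λ^m(v)` is finite. -/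
def RowFinite : Prop := ∀ (v : Λ.Obj) (m : Fin k → ℕ), (Λ.degAt m v).Finite

/-- No sources: each `Λ^m(v)` is nonempty. -/
def NoSources : Prop := ∀ (v : Λ.Obj) (m : Fin k → ℕ), (Λ.degAt m v).Nonempty

/-- Local convexity. -/
def LocallyConvex : Prop :=
  ∀ (v : Λ.Obj) (i j : Fin k), i ≠ j →
    ∀ lam μ, lam ∈ Λ.degAt (e k i) v → μ ∈ Λ.degAt (e k j) v →
      (Λ.degAt (e k j) (Λ.s lam)).Nonempty ∧ (Λ.degAt (e k i) (Λ.s μ)).Nonempty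

section CK

variable {A : Type} [Ring A] [StarRing A]

/-- Cuntz-Krieger relations (1)-(3). -/
structure IsCK13 (S : Λ.Path → A) : Prop where
  proj : ∀ v, S (Λ.ι v) * S (Λ.ι v) = S (Λ.ι v)
  selfadj : ∀ v, star (S (Λ.ι v)) = S (Λ.ι v)
  orth : ∀ v w, v ≠ w → S (Λ.ι v) * S (Λ.ι w) = 0
  mul : ∀ μ ν (h : Λ.s μ = Λ.r ν), S (Λ.comp μ ν h) = S μ * S ν
  src : ∀ lam, star (S lam) * S lam = S (Λ.ι (Λ.s lam))

/-- A Cuntz-Krieger `Λ`-family: relations (1)-(4). -/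
structure IsCKFamily (S : Λ.Path → A) extends IsCK13 Λ S : Prop where
  sum : ∀ (v : Λ.Obj) (m : Fin k → ℕ),
    S (Λ.ι v) = ∑ᶠ lam ∈ Λ.leAt m v, S lam * star (S lam)

end CK

/-- Hereditary subsets of `Λ^0`. -/
def Hereditary (H : Set Λ.Obj) : Prop :=
  ∀ lam : Λ.Path, Λ.r lam ∈ H → Λ.s lam ∈ H

/-- The operator `Σ` used in the inductive construction of the saturation. -/
def Sig (F : Set Λ.Obj) : Set Λ.Obj :=
  ⋃ i : Fin k, {v | ∀ lam ∈ Λ.leAt (e k i) v, Λ.s lam ∈ F}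

/-- Saturated subsets of `Λ^0`. -/
def Saturated (H : Set Λ.Obj) : Prop :=
  ∀ (v : Λ.Obj) (i : Fin k), (∀ lam ∈ Λ.leAt (e k i) v, Λ.s lam ∈ H) → v ∈ H

/-- The saturation: smallest saturated set containing `H`. -/
def saturation (H : Set Λ.Obj) : Set Λ.Obj :=
  ⋂₀ {S | Λ.Saturated S ∧ H ⊆ S}

end KGraph

/-- A boundary path: a degree-preserving graph morphism `x : Ω_{k,m} → Λ`
for some `m ∈ (ℕ ∪ {∞})^k`, such that whenever `p + e_i ≰ m`, the vertex `x(p)`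
receives no edges of degree `e_i`. -/
structure BPath {k : ℕ} (Λ : KGraph k) where
  deg : Fin k → ℕ∞
  toFun : ∀ p q : Fin k → ℕ, p ≤ q → (∀ i, (q i : ℕ∞) ≤ deg i) → Λ.Path
  d_toFun : ∀ p q h1 h2, Λ.d (toFun p q h1 h2) = q - p
  comp_toFun : ∀ p q r (hpq : p ≤ q) (hqr : q ≤ r) (hpr : p ≤ r)
      (hr : ∀ i, (r i : ℕ∞) ≤ deg i) (hq : ∀ i, (q i : ℕ∞) ≤ deg i),
    ∃ hc : Λ.s (toFun p q hpq hq) = Λ.r (toFun q r hqr hr),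
      Λ.comp _ _ hc = toFun p r hpr hr
  bdry : ∀ (p : Fin k → ℕ) (hp : ∀ i, (p i : ℕ∞) ≤ deg i) (i : Fin k),
    ¬ ((p i : ℕ∞) + 1 ≤ deg i) →
    Λ.degAt (KGraph.e k i) (Λ.r (toFun p p le_rfl hp)) = ∅

namespace BPath

variable {k : ℕ} {Λ : KGraph k}

/-- The range of a boundary path. -/
def r (x : BPath Λ) : Λ.Obj :=
  Λ.r (x.toFun 0 0 le_rfl (fun i => by simp))

end BPath

/-- An infinite path: a graph morphism `x : Ω_k → Λ`. -/
structure InfPath {k : ℕ} (Λ : KGraph k) where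
  toFun : ∀ p q : Fin k → ℕ, p ≤ q → Λ.Path
  d_toFun : ∀ p q h, Λ.d (toFun p q h) = q - p
  comp_toFun : ∀ p q r (hpq : p ≤ q) (hqr : q ≤ r) (hpr : p ≤ r),
    ∃ hc : Λ.s (toFun p q hpq) = Λ.r (toFun q r hqr),
      Λ.comp _ _ hc = toFun p r hpr

namespace InfPath

variable {k : ℕ} {Λ : KGraph k}

/-- The range of an infinite path. -/
def r (x : InfPath Λ) : Λ.Obj := Λ.r (x.toFun 0 0 le_rfl)

/-- The shift `σ^p`. -/
def shift (p : Fin k → ℕ) (x : InfPath Λ) : InfPath Λ where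
  toFun a b h := x.toFun (a + p) (b + p) (add_le_add_left h p)
  d_toFun a b h := by
    rw [x.d_toFun]
    funext i
    simp only [Pi.sub_apply, Pi.add_apply]
    omega
  comp_toFun a b c hab hbc hac :=
    x.comp_toFun (a + p) (b + p) (c + p) (add_le_add_left hab p)
      (add_le_add_left hbc p) (add_le_add_left hac p)

end InfPath

/-!
Starting from `v`, keep extending at the source by a path of `Λ^{≤(1,…,1)}`; such paths
exist in every `k`-graph (take one of maximal degree). The resulting chain of paths
`λ₀ ⊑ λ₁ ⊑ ⋯` glues to a graph morphism `x : Ω_{k,m} → Λ` with `m = sup_n d(λₙ)`.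
If `p + e_i ≰ m`, the `i`-th degree stalls at `p i`: then no edge of degree `e_i` has range
`s(λₙ₊₁)`, and the segment of `λₙ₊₁` from `p` on has no `i`-component. Local convexity moves
edges of degree `e_i` along such a segment from its range to its source, so none has range
`x(p)` either.
-/

theorem ENat.exists_le_of_natCast_le_iSup {ι : Type*} [Nonempty ι] {a : ι → ℕ} {m : ℕ}
    (h : (m : ℕ∞) ≤ ⨆ i, (a i : ℕ∞)) : ∃ i, m ≤ a i := by
  by_contra! hlt
  have hsup : ⨆ i, (a i : ℕ∞) ≤ (m - 1 : ℕ) :=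
    iSup_le fun i => Nat.cast_le.mpr (Nat.le_sub_one_of_lt (hlt i))
  have := Nat.cast_le.mp (h.trans hsup)
  have := hlt (Classical.arbitrary ι)
  omega

namespace KGraph

variable {k : ℕ}

theorem e_le_iff {i : Fin k} {m : Fin k → ℕ} : e k i ≤ m ↔ 1 ≤ m i := by
  refine ⟨fun h => by simpa [e] using h i, fun h j => ?_⟩
  rcases eq_or_ne j i with rfl | hj
  · simpa [e] using h
  · simp [e, hj]

theorem not_add_e_le_self {i : Fin k} {m : Fin k → ℕ} : ¬ m + e k i ≤ m := fun h => by
  simpa [e] using h i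

variable (Λ : KGraph k)

/-- `μ = α β` in `Λ`. -/
def IsComp (α β μ : Λ.Path) : Prop := ∃ h : Λ.s α = Λ.r β, Λ.comp α β h = μ

variable {Λ}

theorem isComp_comp (α β : Λ.Path) (h : Λ.s α = Λ.r β) : Λ.IsComp α β (Λ.comp α β h) :=
  ⟨h, rfl⟩

namespace IsComp

variable {α β γ δ μ : Λ.Path}

theorem s_eq_r (h : Λ.IsComp α β μ) : Λ.s α = Λ.r β := h.1

theorem r_eq (h : Λ.IsComp α β μ) : Λ.r μ = Λ.r α := by
  obtain ⟨h, rfl⟩ := h; exact Λ.r_comp _ _ _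

theorem s_eq (h : Λ.IsComp α β μ) : Λ.s μ = Λ.s β := by
  obtain ⟨h, rfl⟩ := h; exact Λ.s_comp _ _ _

theorem d_eq (h : Λ.IsComp α β μ) : Λ.d μ = Λ.d α + Λ.d β := by
  obtain ⟨h, rfl⟩ := h; exact Λ.d_comp _ _ _

theorem d_left_le (h : Λ.IsComp α β μ) : Λ.d α ≤ Λ.d μ := h.d_eq ▸ le_self_add

theorem d_right_le (h : Λ.IsComp α β μ) : Λ.d β ≤ Λ.d μ := h.d_eq ▸ le_add_self

theorem assoc (h₁ : Λ.IsComp α β γ) (h₂ : Λ.IsComp γ δ μ) :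
    ∃ ε, Λ.IsComp β δ ε ∧ Λ.IsComp α ε μ := by
  obtain ⟨hαβ, rfl⟩ := h₁
  obtain ⟨hγδ, rfl⟩ := h₂
  have hβδ : Λ.s β = Λ.r δ := (Λ.s_comp _ _ _).symm.trans hγδ
  have hα : Λ.s α = Λ.r (Λ.comp β δ hβδ) := hαβ.trans (Λ.r_comp _ _ _).symm
  exact ⟨_, isComp_comp _ _ hβδ, hα, (Λ.comp_assoc _ _ _ _ _ _ _).symm⟩

theorem unique {α' β' : Λ.Path} (h : Λ.IsComp α β μ) (h' : Λ.IsComp α' β' μ)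
    (hd : Λ.d α = Λ.d α') : α = α' ∧ β = β' := by
  have hdβ : Λ.d β = Λ.d β' := add_left_cancel (hd ▸ h.d_eq.symm.trans h'.d_eq)
  obtain ⟨_, -, huniq⟩ := Λ.factor μ (Λ.d α) (Λ.d β) h.d_eq
  have := (huniq (α, β) ⟨h.1, h.2, rfl, rfl⟩).trans
    (huniq (α', β') ⟨h'.1, h'.2, hd.symm, hdβ.symm⟩).symm
  exact Prod.ext_iff.mp this

end IsComp

theorem exists_isComp_of_le {μ : Λ.Path} {p : Fin k → ℕ} (hp : p ≤ Λ.d μ) :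
    ∃ αβ : Λ.Path × Λ.Path, Λ.IsComp αβ.1 αβ.2 μ ∧ Λ.d αβ.1 = p := by
  obtain ⟨αβ, ⟨h, hc, hα, -⟩, -⟩ := Λ.factor μ p (Λ.d μ - p) (add_tsub_cancel_of_le hp).symm
  exact ⟨αβ, ⟨h, hc⟩, hα⟩

theorem isComp_ι_left (μ : Λ.Path) : Λ.IsComp (Λ.ι (Λ.r μ)) μ μ :=
  ⟨Λ.s_ι _, Λ.comp_ι_left _ _⟩

theorem isComp_ι_right (μ : Λ.Path) : Λ.IsComp μ (Λ.ι (Λ.s μ)) μ :=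
  ⟨(Λ.r_ι _).symm, Λ.comp_ι_right _ _⟩

theorem s_eq_r_of_d_eq_zero {μ : Λ.Path} (h : Λ.d μ = 0) : Λ.s μ = Λ.r μ := by
  have := ((isComp_ι_right μ).unique (isComp_ι_left μ) (h.trans (Λ.d_ι _).symm)).1
  rw [this, Λ.s_ι, Λ.r_ι]

theorem LocallyConvex.degAt_s_nonempty (hlc : Λ.LocallyConvex) {i : Fin k} {ν : Λ.Path}
    (hνi : Λ.d ν i = 0) (h : (Λ.degAt (e k i) (Λ.r ν)).Nonempty) :
    (Λ.degAt (e k i) (Λ.s ν)).Nonempty := by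
  induction hn : Λ.d ν using WellFoundedLT.induction generalizing ν with
  | _ n ih =>
  subst hn
  by_cases hν0 : Λ.d ν = 0
  · rwa [s_eq_r_of_d_eq_zero hν0]
  obtain ⟨j, hj⟩ : ∃ j, Λ.d ν j ≠ 0 := by
    by_contra! h0; exact hν0 (funext h0)
  have hij : i ≠ j := by rintro rfl; exact hj hνi
  obtain ⟨⟨f, ν'⟩, hfν, hf⟩ :=
    exists_isComp_of_le (μ := ν) (e_le_iff.mpr (Nat.one_le_iff_ne_zero.mpr hj))
  have hlt : Λ.d ν' < Λ.d ν := by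
    refine lt_of_le_of_ne hfν.d_right_le fun hν' => ?_
    have := hfν.d_eq
    rw [hf, hν', add_comm] at this
    exact not_add_e_le_self this.ge
  obtain ⟨g, hg⟩ := h
  have hsf : (Λ.degAt (e k i) (Λ.s f)).Nonempty :=
    (hlc _ i j hij g f ⟨hg.1, hg.2.trans hfν.r_eq⟩ ⟨hf, rfl⟩).2
  rw [hfν.s_eq]
  exact ih _ hlt (Nat.le_zero.mp (hνi ▸ hlt.le i)) (hfν.s_eq_r ▸ hsf) rfl

/-- A path from `w` whose degree is maximal below `q` cannot be extended within degree `q`. -/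
theorem leAt_nonempty (q : Fin k → ℕ) (w : Λ.Obj) : (Λ.leAt q w).Nonempty := by
  set S := {m | m ≤ q ∧ ∃ μ, Λ.d μ = m ∧ Λ.r μ = w}
  have hS : S.Finite := (Set.finite_Iic q).subset fun m hm => hm.1
  obtain ⟨m, ⟨hmq, μ, rfl, hμ⟩, hmax⟩ :=
    hS.exists_maximal ⟨0, fun _ => Nat.zero_le _, Λ.ι w, Λ.d_ι w, Λ.r_ι w⟩
  refine ⟨μ, ⟨hmq, fun i hi => Set.eq_empty_of_forall_notMem fun f hf => ?_⟩, hμ⟩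
  have hμf := isComp_comp μ f hf.2.symm
  have hd : Λ.d (Λ.comp μ f hf.2.symm) = Λ.d μ + e k i := by rw [hμf.d_eq, hf.1]
  have := hmax ⟨hd ▸ hi, _, rfl, hμf.r_eq.trans hμ⟩ (hd ▸ le_self_add)
  exact not_add_e_le_self (hd ▸ this)

open Classical in
/-- The factorisation `μ = μ(0, p) μ(p, d μ)`; junk unless `p ≤ d μ`. -/
noncomputable def split (μ : Λ.Path) (p : Fin k → ℕ) : Λ.Path × Λ.Path :=
  if hp : p ≤ Λ.d μ then (exists_isComp_of_le hp).choose else (μ, Λ.ι (Λ.s μ))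

noncomputable def head (μ : Λ.Path) (p : Fin k → ℕ) : Λ.Path := (split μ p).1

noncomputable def tail (μ : Λ.Path) (p : Fin k → ℕ) : Λ.Path := (split μ p).2

/-- The segment `μ(p, q)`. -/
noncomputable def seg (μ : Λ.Path) (p q : Fin k → ℕ) : Λ.Path := tail (head μ q) p

section Segments

variable {α β μ : Λ.Path} {p q r : Fin k → ℕ}

theorem isComp_head_tail (hp : p ≤ Λ.d μ) : Λ.IsComp (head μ p) (tail μ p) μ := by
  rw [head, tail, split, dif_pos hp]; exact (exists_isComp_of_le hp).choose_spec.1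

theorem d_head (hp : p ≤ Λ.d μ) : Λ.d (head μ p) = p := by
  rw [head, split, dif_pos hp]; exact (exists_isComp_of_le hp).choose_spec.2

theorem IsComp.head_eq (h : Λ.IsComp α β μ) : head μ (Λ.d α) = α :=
  ((isComp_head_tail h.d_left_le).unique h (d_head h.d_left_le)).1

theorem IsComp.tail_eq (h : Λ.IsComp α β μ) : tail μ (Λ.d α) = β :=
  ((isComp_head_tail h.d_left_le).unique h (d_head h.d_left_le)).2

theorem IsComp.head_of_le (h : Λ.IsComp α β μ) (hq : q ≤ Λ.d α) : head μ q = head α q := by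
  obtain ⟨ε, -, hε⟩ := (isComp_head_tail hq).assoc h
  simpa only [d_head hq] using hε.head_eq

theorem isComp_tail_head_tail (hpq : p ≤ q) (hq : q ≤ Λ.d μ) :
    Λ.IsComp (tail (head μ q) p) (tail μ q) (tail μ p) := by
  have hp : p ≤ Λ.d (head μ q) := (d_head hq).symm ▸ hpq
  obtain ⟨ε, hε, hμ⟩ := (isComp_head_tail hp).assoc (isComp_head_tail hq)
  obtain rfl : tail μ p = ε := by simpa only [d_head hp] using hμ.tail_eq
  exact hε

theorem d_seg (hpq : p ≤ q) (hq : q ≤ Λ.d μ) : Λ.d (seg μ p q) = q - p := by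
  have hp : p ≤ Λ.d (head μ q) := (d_head hq).symm ▸ hpq
  have h := (isComp_head_tail hp).d_eq
  rw [d_head hq, d_head hp] at h
  exact (tsub_eq_of_eq_add_rev h).symm

theorem r_seg (hpq : p ≤ q) (hq : q ≤ Λ.d μ) : Λ.r (seg μ p q) = Λ.s (head μ p) := by
  have hp : p ≤ Λ.d (head μ q) := (d_head hq).symm ▸ hpq
  rw [seg, ← (isComp_head_tail hp).s_eq_r, ← (isComp_head_tail hq).head_of_le hp]

theorem isComp_seg (hpq : p ≤ q) (hqr : q ≤ r) (hr : r ≤ Λ.d μ) :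
    Λ.IsComp (seg μ p q) (seg μ q r) (seg μ p r) := by
  have hq : q ≤ Λ.d (head μ r) := (d_head hr).symm ▸ hqr
  rw [seg, seg, seg, (isComp_head_tail hr).head_of_le hq]
  exact isComp_tail_head_tail hpq hq

theorem IsComp.seg_eq (h : Λ.IsComp α β μ) (hq : q ≤ Λ.d α) : seg μ p q = seg α p q := by
  rw [seg, seg, h.head_of_le hq]

theorem s_head_zero (μ : Λ.Path) : Λ.s (head μ 0) = Λ.r μ := by
  have h0 : (0 : Fin k → ℕ) ≤ Λ.d μ := zero_le
  have h := isComp_head_tail h0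
  rw [s_eq_r_of_d_eq_zero (d_head h0), h.r_eq]

end Segments

theorem LocallyConvex.degAt_s_head_eq_empty (hlc : Λ.LocallyConvex) {μ : Λ.Path}
    {p : Fin k → ℕ} {i : Fin k} (hp : p ≤ Λ.d μ) (hμi : Λ.d μ i = p i)
    (hμ : Λ.degAt (e k i) (Λ.s μ) = ∅) : Λ.degAt (e k i) (Λ.s (head μ p)) = ∅ := by
  have h := isComp_head_tail hp
  have htail : Λ.d (tail μ p) i = 0 := by
    have := congrFun h.d_eq i
    rw [Pi.add_apply, d_head hp, hμi] at this
    omega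
  rw [h.s_eq_r, ← Set.not_nonempty_iff_eq_empty]
  rw [h.s_eq, ← Set.not_nonempty_iff_eq_empty] at hμ
  exact fun hne => hμ (hlc.degAt_s_nonempty htail hne)

variable (Λ)

noncomputable def step (w : Λ.Obj) : Λ.Path := (Λ.leAt_nonempty 1 w).some

theorem step_mem (w : Λ.Obj) : Λ.step w ∈ Λ.leAt 1 w := (Λ.leAt_nonempty 1 w).some_mem

noncomputable def approx (v : Λ.Obj) : ℕ → Λ.Path
  | 0 => Λ.ι v
  | n + 1 => Λ.comp (approx v n) (Λ.step (Λ.s (approx v n))) (Λ.step_mem _).2.symm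

variable {Λ} (v : Λ.Obj)

theorem isComp_approx_succ (n : ℕ) :
    Λ.IsComp (Λ.approx v n) (Λ.step (Λ.s (Λ.approx v n))) (Λ.approx v (n + 1)) :=
  isComp_comp _ _ _

theorem r_approx (n : ℕ) : Λ.r (Λ.approx v n) = v := by
  induction n with
  | zero => exact Λ.r_ι v
  | succ n ih => rw [(isComp_approx_succ v n).r_eq, ih]

theorem exists_isComp_approx {m n : ℕ} (hmn : m ≤ n) :
    ∃ β, Λ.IsComp (Λ.approx v m) β (Λ.approx v n) := by
  induction n, hmn using Nat.le_induction with
  | base => exact ⟨_, isComp_ι_right _⟩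
  | succ n _ ih =>
    obtain ⟨β, hβ⟩ := ih
    obtain ⟨ε, -, hε⟩ := hβ.assoc (isComp_approx_succ v n)
    exact ⟨ε, hε⟩

theorem monotone_d_approx : Monotone fun n => Λ.d (Λ.approx v n) := fun _ _ hmn =>
  (exists_isComp_approx v hmn).choose_spec.d_left_le

theorem seg_approx_eq {m n : ℕ} {p q : Fin k → ℕ} (hm : q ≤ Λ.d (Λ.approx v m))
    (hn : q ≤ Λ.d (Λ.approx v n)) : seg (Λ.approx v m) p q = seg (Λ.approx v n) p q := by
  wlog hmn : m ≤ n generalizing m n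
  · exact (this hn hm (le_of_not_ge hmn)).symm
  obtain ⟨β, h⟩ := exists_isComp_approx v hmn
  exact (h.seg_eq hm).symm

theorem degAt_s_approx_succ_eq_empty {n : ℕ} {i : Fin k}
    (h : Λ.d (Λ.approx v (n + 1)) i = Λ.d (Λ.approx v n) i) :
    Λ.degAt (e k i) (Λ.s (Λ.approx v (n + 1))) = ∅ := by
  have hc := isComp_approx_succ v n
  obtain ⟨⟨hle, hmax⟩, -⟩ := Λ.step_mem (Λ.s (Λ.approx v n))
  have hi : Λ.d (Λ.step (Λ.s (Λ.approx v n))) i = 0 := by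
    have := congrFun hc.d_eq i
    rw [Pi.add_apply] at this
    omega
  rw [hc.s_eq]
  refine hmax i fun j => ?_
  rcases eq_or_ne j i with rfl | hj
  · simp [e, hi]
  · simpa [e, hj] using hle j

theorem LocallyConvex.degAt_s_head_approx_eq_empty (hlc : Λ.LocallyConvex) {n : ℕ}
    {p : Fin k → ℕ} {i : Fin k} (hp : p ≤ Λ.d (Λ.approx v n))
    (hdeg : ∀ m, Λ.d (Λ.approx v m) i ≤ p i) :
    Λ.degAt (e k i) (Λ.s (head (Λ.approx v n) p)) = ∅ := by
  have hp' := hp.trans (monotone_d_approx v n.le_succ)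
  have hn : Λ.d (Λ.approx v n) i = p i := le_antisymm (hdeg n) (hp i)
  have hn' : Λ.d (Λ.approx v (n + 1)) i = p i := le_antisymm (hdeg _) (hp' i)
  rw [← (exists_isComp_approx v n.le_succ).choose_spec.head_of_le hp]
  exact hlc.degAt_s_head_eq_empty hp' hn' (degAt_s_approx_succ_eq_empty v (hn'.trans hn.symm))

theorem exists_le_d_approx {q : Fin k → ℕ}
    (hq : ∀ i, (q i : ℕ∞) ≤ ⨆ n, (Λ.d (Λ.approx v n) i : ℕ∞)) :
    ∃ n, q ≤ Λ.d (Λ.approx v n) := by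
  have h : ∀ i, ∀ᶠ n in Filter.atTop, q i ≤ Λ.d (Λ.approx v n) i := fun i => by
    obtain ⟨n, hn⟩ := ENat.exists_le_of_natCast_le_iSup (hq i)
    exact Filter.eventually_atTop.2 ⟨n, fun m hm => hn.trans (monotone_d_approx v hm i)⟩
  exact (Filter.eventually_all.2 h).exists

theorem d_approx_le_of_not_add_one_le {p : Fin k → ℕ} {i : Fin k}
    (h : ¬ (p i : ℕ∞) + 1 ≤ ⨆ n, (Λ.d (Λ.approx v n) i : ℕ∞)) (n : ℕ) :
    Λ.d (Λ.approx v n) i ≤ p i := by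
  rw [not_le, ENat.lt_add_one_iff (ENat.natCast_ne_top _), iSup_le_iff] at h
  exact Nat.cast_le.mp (h n)

noncomputable def boundaryPath (hlc : Λ.LocallyConvex) : BPath Λ where
  deg i := ⨆ n, (Λ.d (Λ.approx v n) i : ℕ∞)
  toFun p q _ hq := seg (Λ.approx v (exists_le_d_approx v hq).choose) p q
  d_toFun _ _ hpq hq := d_seg hpq (exists_le_d_approx v hq).choose_spec
  comp_toFun _ _ _ hpq hqr _ hr hq := by
    have hn := (exists_le_d_approx v hr).choose_spec
    rw [seg_approx_eq v (exists_le_d_approx v hq).choose_spec (hqr.trans hn)]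
    exact isComp_seg hpq hqr hn
  bdry p hp i hi := by
    rw [r_seg le_rfl (exists_le_d_approx v hp).choose_spec]
    exact hlc.degAt_s_head_approx_eq_empty v (exists_le_d_approx v hp).choose_spec
      (d_approx_le_of_not_add_one_le v hi)

theorem r_boundaryPath (hlc : Λ.LocallyConvex) : (boundaryPath v hlc).r = v := by
  have h0 : ∀ i, ((0 : Fin k → ℕ) i : ℕ∞) ≤ ⨆ n, (Λ.d (Λ.approx v n) i : ℕ∞) := by simp
  exact (r_seg le_rfl (exists_le_d_approx v h0).choose_spec).trans
    ((s_head_zero _).trans (r_approx v _))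

end KGraph

/-- in a locally convex `k`-graph, every vertex is the range of
some boundary path. -/
theorem stmt14 {k : ℕ} (Λ : KGraph k) (hlc : Λ.LocallyConvex) (v : Λ.Obj) :
    ∃ x : BPath Λ, x.r = v :=
  ⟨_, KGraph.r_boundaryPath v hlc⟩
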